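/- arXiv:1805.10904 — 3 statements merged into one kernel-verified Lean document; each statement's English description precedes it below -/
import Mathlib

section
/- Moving a single vertex changes modularity by the stated gain formula: let G = (V, E, ω) be a finite undirected weighted graph with nonnegative weights, W > 0 its total edge weight, S a partition of V, i a vertex with current community C(i), and D a community of S with i ∉ D (or D = ∅). Let S′ be the partition obtained from S by moving i from C(i) to D. Then Q(S′) − Q(S) = (e_{i→D} − e_{i→C(i)∖{i}})/W + δᵢ·(deg_{C(i)∖{i}} − deg_D)/(2W²), where e_{i→C} = Σ_{(i,j) ∈ E, j ∈ C} ω(i,j), δᵢ is the weighted degree of i, and deg_C = Σ_{v ∈ C} δᵥ. -/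
open Finset

/-- moving a single vertex changes modularity by the stated gain formula.
`w` is the symmetric nonnegative edge-weight function, `δ i = ∑ j, w i j` the weighted
degrees, `2W = ∑ i, δ i` with `W > 0`.  `S` is a partition of the vertex set (covering,
pairwise disjoint, nonempty parts), `Ci = C(i)` is the community containing the vertex
`i`, `D` is a community of `S` not containing `i` (or `D = ∅`), and `S'` is obtained
from `S` by replacing `C(i)` with `C(i) \ {i}` and `D` with `D ∪ {i}`.  With `c v`
(resp. `c' v`) the community of `S` (resp. `S'`) containing `v`, the modularities
`Q(S) = (1/(2W)) ∑ v, e_{v→C(v)} − ∑_{C∈S} (deg_C/(2W))²` satisfy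
`Q(S') − Q(S) = (e_{i→D} − e_{i→C(i)∖{i}})/W + δ i·(deg_{C(i)∖{i}} − deg_D)/(2W²)`. -/
theorem modularity_single_vertex_move_gain {V : Type*} [Fintype V] [DecidableEq V]
    (w : V → V → ℝ)
    (hsymm : ∀ a b : V, w a b = w b a)
    (hnonneg : ∀ a b : V, 0 ≤ w a b)
    (δ : V → ℝ) (hδ : ∀ a : V, δ a = ∑ b, w a b)
    (W : ℝ) (hW : 2 * W = ∑ a, δ a) (hWpos : 0 < W)
    (S : Finset (Finset V))
    (hcover : ∀ v : V, ∃ C ∈ S, v ∈ C)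
    (hdisj : ∀ C ∈ S, ∀ C' ∈ S, C ≠ C' → Disjoint C C')
    (hne : ∀ C ∈ S, C.Nonempty)
    (i : V) (Ci : Finset V) (hCiS : Ci ∈ S) (hiCi : i ∈ Ci)
    (D : Finset V) (hD : D ∈ S ∨ D = ∅) (hiD : i ∉ D)
    (S' : Finset (Finset V))
    (hS' : S' = insert (Ci \ {i}) (insert (D ∪ {i}) (S \ {Ci, D})))
    (c : V → Finset V) (hc : ∀ v : V, c v ∈ S ∧ v ∈ c v)
    (c' : V → Finset V) (hc' : ∀ v : V, c' v ∈ S' ∧ v ∈ c' v) :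
    ((1 / (2 * W)) * (∑ v, ∑ j ∈ c' v, w v j)
        - ∑ C ∈ S', ((∑ v ∈ C, δ v) / (2 * W)) ^ 2)
      - ((1 / (2 * W)) * (∑ v, ∑ j ∈ c v, w v j)
        - ∑ C ∈ S, ((∑ v ∈ C, δ v) / (2 * W)) ^ 2)
    = ((∑ j ∈ D, w i j) - ∑ j ∈ Ci \ {i}, w i j) / W
      + δ i * ((∑ v ∈ Ci \ {i}, δ v) - ∑ v ∈ D, δ v) / (2 * W ^ 2) := by
  classical
  have hW2 : (2*W) ≠ 0 := by positivity
  have hCD : Ci ≠ D := fun h => hiD (h ▸ hiCi)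
  have hES : (∅ : Finset V) ∉ S := fun h => by simpa using hne ∅ h
  have huniq : ∀ v (C C' : Finset V), C ∈ S → C' ∈ S → v ∈ C → v ∈ C' → C = C' := by
    intro v C C' hC hC' hv hv'
    by_contra h
    exact (Finset.disjoint_left.mp (hdisj _ hC _ hC' h) hv) hv'
  have hcu : ∀ v (C : Finset V), C ∈ S → v ∈ C → c v = C :=
    fun v C hC hv => huniq v (c v) C (hc v).1 hC (hc v).2 hv
  have hCiD : ∀ v ∈ Ci, v ∉ D := by
    rcases hD with hDS | rfl
    · exact fun v hv => Finset.disjoint_left.mp (hdisj _ hCiS _ hDS hCD) hv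
    · simp
  have hiA : i ∉ Ci \ {i} := by simp
  have hiB : i ∈ D ∪ {i} := by simp
  have hmem' : ∀ C : Finset V,
      C ∈ S' ↔ C = Ci \ {i} ∨ C = D ∪ {i} ∨ (C ∈ S ∧ C ≠ Ci ∧ C ≠ D) := by
    intro C
    subst hS'
    simp only [Finset.mem_insert, Finset.mem_sdiff, Finset.mem_singleton]
    tauto
  have hc'i : c' i = D ∪ {i} := by
    obtain ⟨hmem, hi⟩ := hc' i
    rcases (hmem' _).1 hmem with h | h | ⟨hS, hne1, hne2⟩
    · rw [h] at hi; simp at hi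
    · exact h
    · exact absurd (huniq i _ Ci hS hCiS hi hiCi) hne1
  have hc'Ci : ∀ v ∈ Ci \ {i}, c' v = Ci \ {i} := by
    intro v hv
    obtain ⟨hvCi, hvi⟩ := Finset.mem_sdiff.mp hv
    have hvi' : v ≠ i := by simpa using hvi
    obtain ⟨hmem, hvm⟩ := hc' v
    rcases (hmem' _).1 hmem with h | h | ⟨hS, hne1, hne2⟩
    · exact h
    · rw [h] at hvm
      rcases Finset.mem_union.mp hvm with h' | h'
      · exact absurd h' (hCiD v hvCi)
      · simp only [Finset.mem_singleton] at h'
        exact absurd h' hvi'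
    · exact absurd (huniq v _ Ci hS hCiS hvm hvCi) hne1
  have hDS' : ∀ v ∈ D, D ∈ S := by
    intro v hv
    rcases hD with h | rfl
    · exact h
    · simp at hv
  have hc'D : ∀ v ∈ D, c' v = D ∪ {i} := by
    intro v hv
    have hDS := hDS' v hv
    have hvCi : v ∉ Ci := fun h => hCiD v h hv
    obtain ⟨hmem, hvm⟩ := hc' v
    rcases (hmem' _).1 hmem with h | h | ⟨hS, hne1, hne2⟩
    · rw [h] at hvm; exact absurd (Finset.mem_sdiff.mp hvm).1 hvCi
    · exact h
    · exact absurd (huniq v _ D hS hDS hvm hv) hne2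
  have hc'other : ∀ v, v ∉ Ci → v ∉ D → c' v = c v := by
    intro v hvCi hvD
    have hvi : v ≠ i := fun h => hvCi (h ▸ hiCi)
    obtain ⟨hmem, hvm⟩ := hc' v
    rcases (hmem' _).1 hmem with h | h | ⟨hS, hne1, hne2⟩
    · rw [h] at hvm; exact absurd (Finset.mem_sdiff.mp hvm).1 hvCi
    · rw [h] at hvm
      rcases Finset.mem_union.mp hvm with h' | h'
      · exact absurd h' hvD
      · simp only [Finset.mem_singleton] at h'
        exact absurd h' hvi
    · exact huniq v _ (c v) hS (hc v).1 hvm (hc v).2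
  have hsum_union : ∀ g : V → ℝ, ∑ j ∈ D ∪ {i}, g j = (∑ j ∈ D, g j) + g i := by
    intro g
    rw [Finset.sum_union (by simpa using hiD)]
    simp
  have hsum_Ci : ∀ g : V → ℝ, ∑ j ∈ Ci, g j = (∑ j ∈ Ci \ {i}, g j) + g i :=
    fun g => Finset.sum_eq_sum_sdiff_singleton_add hiCi g
  -- edge part
  have hedge : (∑ v, ∑ j ∈ c' v, w v j) - (∑ v, ∑ j ∈ c v, w v j)
      = 2 * ((∑ j ∈ D, w i j) - ∑ j ∈ Ci \ {i}, w i j) := by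
    rw [← Finset.sum_sub_distrib]
    have key : ∀ v : V, (∑ j ∈ c' v, w v j) - (∑ j ∈ c v, w v j)
        = (if v ∈ D then w v i else 0) - (if v ∈ Ci \ {i} then w v i else 0)
          + (if v = i then ((∑ j ∈ D, w i j) - ∑ j ∈ Ci \ {i}, w i j) else 0) := by
      intro v
      by_cases hvi : v = i
      · subst hvi
        rw [hc'i, hcu v Ci hCiS hiCi, hsum_union, hsum_Ci]
        simp only [hiD, hiA, if_neg, if_pos, ite_true, ite_false]
        simp [hiD, hiA]
      · by_cases hvCi : v ∈ Ci
        · have hvD : v ∉ D := hCiD v hvCi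
          have hvA : v ∈ Ci \ {i} := Finset.mem_sdiff.mpr ⟨hvCi, by simpa using hvi⟩
          rw [hc'Ci v hvA, hcu v Ci hCiS hvCi, hsum_Ci]
          simp [hvD, hvA, hvi]
        · have hvA : v ∉ Ci \ {i} := fun h => hvCi (Finset.mem_sdiff.mp h).1
          by_cases hvD : v ∈ D
          · rw [hc'D v hvD, hcu v D (hDS' v hvD) hvD, hsum_union]
            simp [hvD, hvA, hvi]
          · rw [hc'other v hvCi hvD]
            simp [hvD, hvA, hvi]
    rw [Finset.sum_congr rfl (fun v _ => key v), Finset.sum_add_distrib,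
      Finset.sum_sub_distrib]
    have h1 : ∑ v, (if v ∈ D then w v i else 0) = ∑ j ∈ D, w i j := by
      rw [Finset.sum_ite_mem, Finset.univ_inter]
      exact Finset.sum_congr rfl fun j _ => hsymm j i
    have h2 : ∑ v, (if v ∈ Ci \ {i} then w v i else 0) = ∑ j ∈ Ci \ {i}, w i j := by
      rw [Finset.sum_ite_mem, Finset.univ_inter]
      exact Finset.sum_congr rfl fun j _ => hsymm j i
    have h3 : ∑ v, (if v = i then ((∑ j ∈ D, w i j) - ∑ j ∈ Ci \ {i}, w i j) else 0)
        = (∑ j ∈ D, w i j) - ∑ j ∈ Ci \ {i}, w i j := by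
      simp
    rw [h1, h2, h3]; ring
  -- degree part
  set f : Finset V → ℝ := fun C => ((∑ v ∈ C, δ v) / (2 * W)) ^ 2 with hf
  have hAnot : Ci \ {i} ∉ insert (D ∪ {i}) (S \ {Ci, D}) := by
    intro h
    rcases Finset.mem_insert.mp h with h | h
    · rw [← h] at hiB; exact hiA hiB
    · have hAS : Ci \ {i} ∈ S := (Finset.mem_sdiff.mp h).1
      obtain ⟨x, hx⟩ := hne _ hAS
      have hxCi : x ∈ Ci := (Finset.mem_sdiff.mp hx).1
      have hne' : Ci ≠ Ci \ {i} := fun h' => hiA (h' ▸ hiCi)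
      exact Finset.disjoint_left.mp (hdisj _ hCiS _ hAS hne') hxCi hx
  have hBnot : D ∪ {i} ∉ S \ {Ci, D} := by
    intro h
    obtain ⟨hBS, hBne⟩ := Finset.mem_sdiff.mp h
    simp only [Finset.mem_insert, Finset.mem_singleton] at hBne
    push_neg at hBne
    have : D ∪ {i} ≠ Ci := hBne.1
    exact Finset.disjoint_left.mp (hdisj _ hBS _ hCiS this) hiB hiCi
  have hsumS' : ∑ C ∈ S', f C
      = f (Ci \ {i}) + f (D ∪ {i}) + ∑ C ∈ S \ {Ci, D}, f C := by
    subst hS'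
    rw [Finset.sum_insert hAnot, Finset.sum_insert hBnot]
    ring
  have hsumS : ∑ C ∈ S, f C = f Ci + f D + ∑ C ∈ S \ {Ci, D}, f C := by
    rcases hD with hDS | rfl
    · have hsub : ({Ci, D} : Finset (Finset V)) ⊆ S := by
        intro C hC
        rcases Finset.mem_insert.mp hC with rfl | hC
        · exact hCiS
        · rw [Finset.mem_singleton.mp hC]; exact hDS
      rw [← Finset.sum_sdiff hsub, Finset.sum_pair hCD]
      ring
    · have heq : S \ ({Ci, (∅ : Finset V)} : Finset (Finset V)) = S \ {Ci} := by
        ext C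
        simp only [Finset.mem_sdiff, Finset.mem_insert, Finset.mem_singleton]
        constructor
        · rintro ⟨h1, h2⟩; exact ⟨h1, fun h => h2 (Or.inl h)⟩
        · rintro ⟨h1, h2⟩
          refine ⟨h1, ?_⟩
          rintro (h | h)
          · exact h2 h
          · subst h; exact hES h1
      have hf0 : f ∅ = 0 := by simp [hf]
      rw [heq, ← Finset.sum_sdiff (Finset.singleton_subset_iff.mpr hCiS),
        Finset.sum_singleton, hf0]
      ring
  have hfinal : ((1 / (2 * W)) * (∑ v, ∑ j ∈ c' v, w v j) - ∑ C ∈ S', f C)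
      - ((1 / (2 * W)) * (∑ v, ∑ j ∈ c v, w v j) - ∑ C ∈ S, f C)
    = (1 / (2 * W)) * ((∑ v, ∑ j ∈ c' v, w v j) - ∑ v, ∑ j ∈ c v, w v j)
      - (f (Ci \ {i}) + f (D ∪ {i}) - f Ci - f D) := by
    rw [hsumS', hsumS]; ring
  rw [hfinal, hedge]
  simp only [hf]
  rw [hsum_Ci δ, hsum_union δ]
  have hWne : W ≠ 0 := ne_of_gt hWpos
  field_simp
  ring
end

section
/- Accepted moves strictly increase modularity, so modularity is monotonically increasing over the iterations: under the setup of the single-vertex move (finite undirected weighted graph with nonnegative weights, W > 0, partition S, vertex i moved from C(i) to community D), if the modularity gain ΔQ_{i→D} = (e_{i→D} − e_{i→C(i)∖{i}})/W + δᵢ·(deg_{C(i)∖{i}} − deg_D)/(2W²) is strictly positive, then the new partition S′ obtained by the move satisfies Q(S′) > Q(S). -/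
open Finset

/-!
Both terms of the modularity are sums over the communities of a score
`ω(C)/(2W) - (deg_C/(2W))²`, where `ω(C)` is the weight inside `C`, and this score vanishes on
`∅`. Moving `i` from `C(i)` to `D` therefore changes `Q` only through the scores of
`C(i)`, `D`, `C(i) ∖ {i}` and `D ∪ {i}`. Adding `i` to a community `X ∌ i` raises its score by
`e_{i→X}/W + ω(i,i)/(2W) - δᵢ(2 deg_X + δᵢ)/(4W²)`, and the difference of these increments for
`X = D` and `X = C(i) ∖ {i}` is exactly `ΔQ_{i→D}`. So `Q(S') - Q(S) = ΔQ_{i→D} > 0`.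
-/

theorem sum_insert_eq_add_of_mem_imp_eq_zero {α M : Type*} [DecidableEq α] [AddCommMonoid M]
    {s : Finset α} {a : α} (f : α → M) (h : a ∈ s → f a = 0) :
    ∑ x ∈ insert a s, f x = f a + ∑ x ∈ s, f x := by
  by_cases ha : a ∈ s
  · rw [insert_eq_of_mem ha, h ha, zero_add]
  · exact sum_insert ha

theorem sum_sdiff_pair_eq {α M : Type*} [DecidableEq α] [AddCommGroup M] {s : Finset α}
    {a b : α} (f : α → M) (ha : a ∈ s) (hab : a ≠ b) (hb : b ∉ s → f b = 0) :
    ∑ x ∈ s \ {a, b}, f x = ∑ x ∈ s, f x - f a - f b := by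
  have hinter : ∑ x ∈ s ∩ {a, b}, f x = f a + f b := by
    rw [← sum_pair hab]
    refine sum_subset inter_subset_right fun x hx hxs => ?_
    rcases mem_insert.1 hx with rfl | hx
    · exact absurd (mem_inter.2 ⟨ha, hx⟩) hxs
    · rw [mem_singleton.1 hx] at hxs ⊢
      exact hb fun hbs => hxs (mem_inter.2 ⟨hbs, by simp⟩)
  rw [← sum_inter_add_sum_sdiff s {a, b}, hinter]
  abel

theorem sum_apply_block_eq_sum_sum {V M : Type*} [Fintype V] [AddCommMonoid M]
    {S : Finset (Finset V)} (hS : (S : Set (Finset V)).PairwiseDisjoint id)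
    {c : V → Finset V} (hc : ∀ v, c v ∈ S ∧ v ∈ c v) (F : V → Finset V → M) :
    ∑ v, F v (c v) = ∑ C ∈ S, ∑ v ∈ C, F v C := by
  classical
  rw [← sum_fiberwise_of_maps_to (t := S) (g := c) fun v _ => (hc v).1]
  refine sum_congr rfl fun C hC => ?_
  have hblock : ∀ v ∈ C, c v = C := fun v hv => hS.elim_finset (hc v).1 hC v (hc v).2 hv
  have hfiber : ({v | c v = C} : Finset V) = C := by
    ext v
    simp only [mem_filter, mem_univ, true_and]
    exact ⟨fun h => h ▸ (hc v).2, hblock v⟩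
  exact sum_congr hfiber fun v hv => by rw [hblock v hv]

theorem sum_sum_insert_insert_of_symm {V R : Type*} [DecidableEq V] [CommSemiring R]
    {w : V → V → R} (hw : ∀ a b, w a b = w b a) {i : V} {X : Finset V} (hi : i ∉ X) :
    ∑ v ∈ insert i X, ∑ j ∈ insert i X, w v j
      = ∑ v ∈ X, ∑ j ∈ X, w v j + 2 * ∑ j ∈ X, w i j + w i i := by
  simp_rw [sum_insert hi, sum_add_distrib]
  rw [sum_congr rfl fun v _ => hw v i]
  ring

theorem disjoint_of_mem_of_notMem {V : Type*} {S : Finset (Finset V)} {i : V} {Ci D : Finset V}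
    (hS : (S : Set (Finset V)).PairwiseDisjoint id)
    (hCi : Ci ∈ S) (hiCi : i ∈ Ci) (hD : D ∈ S ∨ D = ∅) (hiD : i ∉ D) : Disjoint Ci D := by
  rcases hD with hD | rfl
  · exact hS hCi hD fun h => hiD (h ▸ hiCi)
  · exact disjoint_empty_right Ci

section Move

variable {V : Type*} [DecidableEq V] {S : Finset (Finset V)} {i : V} {Ci D : Finset V}

theorem pairwiseDisjoint_move (hS : (S : Set (Finset V)).PairwiseDisjoint id)
    (hCi : Ci ∈ S) (hiCi : i ∈ Ci) (hD : D ∈ S ∨ D = ∅) (hiD : i ∉ D) :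
    ((insert (Ci \ {i}) (insert (D ∪ {i}) (S \ {Ci, D})) : Finset (Finset V)) :
      Set (Finset V)).PairwiseDisjoint id := by
  have hCiD := disjoint_of_mem_of_notMem hS hCi hiCi hD hiD
  have hrest : ∀ C ∈ S \ {Ci, D}, Disjoint Ci C ∧ Disjoint D C := by
    intro C hC
    simp only [mem_sdiff, mem_insert, mem_singleton, not_or] at hC
    obtain ⟨hCS, hCCi, hCD⟩ := hC
    refine ⟨hS hCi hCS (Ne.symm hCCi), ?_⟩
    rcases hD with hD | rfl
    · exact hS hD hCS (Ne.symm hCD)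
    · exact disjoint_empty_left C
  rw [coe_insert, coe_insert]
  refine ((hS.subset (coe_subset.2 sdiff_subset)).insert fun C hC _ => ?_).insert
    fun C hC _ => ?_
  · obtain ⟨hCiC, hDC⟩ := hrest C hC
    exact disjoint_union_left.2
      ⟨hDC, disjoint_singleton_left.2 fun hiC => disjoint_left.1 hCiC hiCi hiC⟩
  · rcases Set.mem_insert_iff.1 hC with rfl | hC
    · exact disjoint_union_right.2 ⟨hCiD.mono_left sdiff_subset, sdiff_disjoint⟩
    · exact (hrest C hC).1.mono_left sdiff_subset

theorem sum_move {M : Type*} [AddCommGroup M] (φ : Finset V → M) (hφ : φ ∅ = 0)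
    (hS : (S : Set (Finset V)).PairwiseDisjoint id)
    (hCi : Ci ∈ S) (hiCi : i ∈ Ci) (hD : D ∈ S ∨ D = ∅) (hiD : i ∉ D) :
    ∑ C ∈ insert (Ci \ {i}) (insert (D ∪ {i}) (S \ {Ci, D})), φ C
      = ∑ C ∈ S, φ C - φ Ci - φ D + φ (Ci \ {i}) + φ (D ∪ {i}) := by
  have hleft : Ci \ {i} ∈ insert (D ∪ {i}) (S \ {Ci, D}) → φ (Ci \ {i}) = 0 := by
    intro h
    rcases mem_insert.1 h with h | h
    · exact absurd (h ▸ mem_union_right D (mem_singleton_self i)) (by simp)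
    · simp only [mem_sdiff, mem_insert, mem_singleton, not_or] at h
      have hempty : Ci \ {i} = ∅ := (hS h.1 hCi h.2.1).eq_bot_of_le sdiff_subset
      rw [hempty, hφ]
  have hjoined : D ∪ {i} ∉ S \ {Ci, D} := by
    intro h
    simp only [mem_sdiff, mem_insert, mem_singleton, not_or] at h
    exact h.2.1 (hS.elim_finset h.1 hCi i (by simp) hiCi)
  have hmissing : D ∉ S → φ D = 0 := fun h => by
    rw [hD.resolve_left h, hφ]
  rw [sum_insert_eq_add_of_mem_imp_eq_zero φ hleft, sum_insert hjoined,
    sum_sdiff_pair_eq φ hCi (by rintro rfl; exact hiD hiCi) hmissing]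
  abel

end Move

section Score

variable {V : Type*} (w : V → V → ℝ) (δ : V → ℝ) (W : ℝ)

noncomputable def communityScore (C : Finset V) : ℝ :=
  (∑ v ∈ C, ∑ j ∈ C, w v j) / (2 * W) - ((∑ v ∈ C, δ v) / (2 * W)) ^ 2

theorem communityScore_empty : communityScore w δ W ∅ = 0 := by
  simp [communityScore]

theorem modularity_eq_sum_communityScore [Fintype V] {S : Finset (Finset V)}
    (hS : (S : Set (Finset V)).PairwiseDisjoint id) {c : V → Finset V}
    (hc : ∀ v, c v ∈ S ∧ v ∈ c v) :
    (1 / (2 * W)) * (∑ v, ∑ j ∈ c v, w v j) - ∑ C ∈ S, ((∑ v ∈ C, δ v) / (2 * W)) ^ 2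
      = ∑ C ∈ S, communityScore w δ W C := by
  rw [sum_apply_block_eq_sum_sum hS hc fun v C => ∑ j ∈ C, w v j, mul_sum, ← sum_sub_distrib]
  refine sum_congr rfl fun C _ => ?_
  rw [communityScore]
  ring

theorem communityScore_insert_sub [DecidableEq V] (hw : ∀ a b, w a b = w b a) {i : V}
    {X : Finset V} (hi : i ∉ X) :
    communityScore w δ W (insert i X) - communityScore w δ W X
      = (∑ j ∈ X, w i j) / W + w i i / (2 * W)
        - δ i * (2 * ∑ v ∈ X, δ v + δ i) / (2 * W) ^ 2 := by
  rw [communityScore, communityScore, sum_sum_insert_insert_of_symm hw hi, sum_insert hi]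
  ring

end Score

theorem modularity_strict_increase_of_positive_gain_general {V : Type*} [Fintype V] [DecidableEq V]
    (w : V → V → ℝ)
    (hsymm : ∀ a b : V, w a b = w b a)
    (δ : V → ℝ)
    (W : ℝ)
    (S : Finset (Finset V))
    (hdisj : ∀ C ∈ S, ∀ C' ∈ S, C ≠ C' → Disjoint C C')
    (i : V) (Ci : Finset V) (hCiS : Ci ∈ S) (hiCi : i ∈ Ci)
    (D : Finset V) (hD : D ∈ S ∨ D = ∅) (hiD : i ∉ D)
    (S' : Finset (Finset V))
    (hS' : S' = insert (Ci \ {i}) (insert (D ∪ {i}) (S \ {Ci, D})))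
    (c : V → Finset V) (hc : ∀ v : V, c v ∈ S ∧ v ∈ c v)
    (c' : V → Finset V) (hc' : ∀ v : V, c' v ∈ S' ∧ v ∈ c' v)
    (hgain : 0 < ((∑ j ∈ D, w i j) - ∑ j ∈ Ci \ {i}, w i j) / W
      + δ i * ((∑ v ∈ Ci \ {i}, δ v) - ∑ v ∈ D, δ v) / (2 * W ^ 2)) :
    (1 / (2 * W)) * (∑ v, ∑ j ∈ c v, w v j)
        - ∑ C ∈ S, ((∑ v ∈ C, δ v) / (2 * W)) ^ 2
      < (1 / (2 * W)) * (∑ v, ∑ j ∈ c' v, w v j)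
        - ∑ C ∈ S', ((∑ v ∈ C, δ v) / (2 * W)) ^ 2 := by
  have hS : (S : Set (Finset V)).PairwiseDisjoint id := fun C hC C' hC' h => hdisj C hC C' hC' h
  subst hS'
  rw [modularity_eq_sum_communityScore w δ W hS hc,
    modularity_eq_sum_communityScore w δ W (pairwiseDisjoint_move hS hCiS hiCi hD hiD) hc',
    sum_move _ (communityScore_empty w δ W) hS hCiS hiCi hD hiD]
  have hleave := communityScore_insert_sub w δ W hsymm (notMem_sdiff_of_mem_right
    (mem_singleton_self i) : i ∉ Ci \ {i})
  have hjoin := communityScore_insert_sub w δ W hsymm hiD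
  rw [insert_sdiff_self_of_mem hiCi] at hleave
  rw [← union_singleton] at hjoin
  have hdiff : (communityScore w δ W (D ∪ {i}) - communityScore w δ W D)
      - (communityScore w δ W Ci - communityScore w δ W (Ci \ {i}))
      = ((∑ j ∈ D, w i j) - ∑ j ∈ Ci \ {i}, w i j) / W
        + δ i * ((∑ v ∈ Ci \ {i}, δ v) - ∑ v ∈ D, δ v) / (2 * W ^ 2) := by
    rw [hleave, hjoin]
    ring
  linarith

/-- accepted moves strictly increase modularity.  Under the setup of the
single-vertex move (symmetric nonnegative weights, `W > 0`, partition `S`, vertex `i`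
moved from its community `Ci = C(i)` to a community `D`), if the modularity gain
`ΔQ_{i→D} = (e_{i→D} − e_{i→C(i)∖{i}})/W + δ i·(deg_{C(i)∖{i}} − deg_D)/(2W²)` is
strictly positive, then the new partition `S'` satisfies `Q(S') > Q(S)`. -/
theorem modularity_strict_increase_of_positive_gain {V : Type*} [Fintype V] [DecidableEq V]
    (w : V → V → ℝ)
    (hsymm : ∀ a b : V, w a b = w b a)
    (hnonneg : ∀ a b : V, 0 ≤ w a b)
    (δ : V → ℝ) (hδ : ∀ a : V, δ a = ∑ b, w a b)
    (W : ℝ) (hW : 2 * W = ∑ a, δ a) (hWpos : 0 < W)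
    (S : Finset (Finset V))
    (hcover : ∀ v : V, ∃ C ∈ S, v ∈ C)
    (hdisj : ∀ C ∈ S, ∀ C' ∈ S, C ≠ C' → Disjoint C C')
    (hne : ∀ C ∈ S, C.Nonempty)
    (i : V) (Ci : Finset V) (hCiS : Ci ∈ S) (hiCi : i ∈ Ci)
    (D : Finset V) (hD : D ∈ S ∨ D = ∅) (hiD : i ∉ D)
    (S' : Finset (Finset V))
    (hS' : S' = insert (Ci \ {i}) (insert (D ∪ {i}) (S \ {Ci, D})))
    (c : V → Finset V) (hc : ∀ v : V, c v ∈ S ∧ v ∈ c v)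
    (c' : V → Finset V) (hc' : ∀ v : V, c' v ∈ S' ∧ v ∈ c' v)
    (hgain : 0 < ((∑ j ∈ D, w i j) - ∑ j ∈ Ci \ {i}, w i j) / W
      + δ i * ((∑ v ∈ Ci \ {i}, δ v) - ∑ v ∈ D, δ v) / (2 * W ^ 2)) :
    (1 / (2 * W)) * (∑ v, ∑ j ∈ c v, w v j)
        - ∑ C ∈ S, ((∑ v ∈ C, δ v) / (2 * W)) ^ 2
      < (1 / (2 * W)) * (∑ v, ∑ j ∈ c' v, w v j)
        - ∑ C ∈ S', ((∑ v ∈ C, δ v) / (2 * W)) ^ 2 :=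
  modularity_strict_increase_of_positive_gain_general w hsymm δ W S hdisj i Ci hCiS hiCi D hD hiD S'
    hS' c hc c' hc' hgain
end

section
/- Community aggregation preserves modularity: let G = (V, E, ω) be a finite undirected weighted graph with nonnegative weights and W > 0, and let S be a partition of V. Form the coarsened graph G′ whose vertices are the communities of S, where the weight of the edge between communities C and C′ (allowing C = C′, giving a loop) is ω′(C, C′) = Σ_{i ∈ C, j ∈ C′, (i,j) ∈ E} ω(i,j). Then G′ has the same total edge weight W, and the modularity in G′ of the partition of G′ into singletons equals the modularity in G of the partition S: Q_{G′}(singletons) = Q_G(S). -/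
/-!
Contracting each community of `S` to a meta-vertex only regroups sums over `V` into sums over
the blocks of `S`. The degree of a meta-vertex is the total degree of its community, so the
total weight is unchanged; the loop at a meta-vertex carries exactly the intra-community weight,
so both terms of the modularity are regrouped versions of those of `S`.
-/

open Finset

namespace Finset

variable {V M : Type*} {S : Finset (Finset V)}

theorem eq_of_mem_of_mem_of_pairwiseDisjoint
    (hdisj : ∀ C ∈ S, ∀ C' ∈ S, C ≠ C' → Disjoint C C') {C D : Finset V} (hC : C ∈ S)
    (hD : D ∈ S) {v : V} (hvC : v ∈ C) (hvD : v ∈ D) : C = D := by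
  by_contra h
  exact disjoint_left.mp (hdisj C hC D hD h) hvC hvD

variable [Fintype V] [AddCommMonoid M]

theorem sum_univ_eq_sum_sum_of_cover (hcover : ∀ v : V, ∃ C ∈ S, v ∈ C)
    (hdisj : ∀ C ∈ S, ∀ C' ∈ S, C ≠ C' → Disjoint C C') (f : V → M) :
    ∑ v, f v = ∑ C ∈ S, ∑ v ∈ C, f v := by
  classical
  have huniv : (univ : Finset V) = S.biUnion id := by
    ext v
    simpa using hcover v
  rw [huniv]
  exact sum_biUnion (t := id) hdisj

theorem sum_univ_eq_sum_sum_of_block (hcover : ∀ v : V, ∃ C ∈ S, v ∈ C)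
    (hdisj : ∀ C ∈ S, ∀ C' ∈ S, C ≠ C' → Disjoint C C') {c : V → Finset V}
    (hc : ∀ v : V, c v ∈ S ∧ v ∈ c v) (g : V → Finset V → M) :
    ∑ v, g v (c v) = ∑ C ∈ S, ∑ v ∈ C, g v C := by
  rw [sum_univ_eq_sum_sum_of_cover hcover hdisj]
  refine sum_congr rfl fun C hC => sum_congr rfl fun v hv => ?_
  rw [eq_of_mem_of_mem_of_pairwiseDisjoint hdisj (hc v).1 hC (hc v).2 hv]

theorem sum_subtype_sum_sum_eq_sum_sum_univ (hcover : ∀ v : V, ∃ C ∈ S, v ∈ C)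
    (hdisj : ∀ C ∈ S, ∀ C' ∈ S, C ≠ C' → Disjoint C C') (C : Finset V) (w : V → V → M) :
    ∑ C' : {C' // C' ∈ S}, ∑ i ∈ C, ∑ j ∈ C'.1, w i j = ∑ i ∈ C, ∑ j, w i j := by
  rw [sum_comm]
  refine sum_congr rfl fun i _ => ?_
  rw [sum_coe_sort S (fun C' => ∑ j ∈ C', w i j), sum_univ_eq_sum_sum_of_cover hcover hdisj]

end Finset

theorem aggregation_preserves_modularity_general {V : Type*} [Fintype V]
    (w : V → V → ℝ)
    (δ : V → ℝ) (hδ : ∀ a : V, δ a = ∑ b, w a b)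
    (W : ℝ) (hW : 2 * W = ∑ a, δ a)
    (S : Finset (Finset V))
    (hcover : ∀ v : V, ∃ C ∈ S, v ∈ C)
    (hdisj : ∀ C ∈ S, ∀ C' ∈ S, C ≠ C' → Disjoint C C')
    (c : V → Finset V) (hc : ∀ v : V, c v ∈ S ∧ v ∈ c v)
    (w' : {C // C ∈ S} → {C // C ∈ S} → ℝ)
    (hw' : ∀ C C' : {C // C ∈ S}, w' C C' = ∑ i ∈ C.1, ∑ j ∈ C'.1, w i j)
    (δ' : {C // C ∈ S} → ℝ) (hδ' : ∀ C : {C // C ∈ S}, δ' C = ∑ C', w' C C')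
    (W' : ℝ) (hW' : 2 * W' = ∑ C : {C // C ∈ S}, δ' C) :
    W' = W ∧
      (1 / (2 * W')) * (∑ C : {C // C ∈ S}, w' C C)
          - ∑ C : {C // C ∈ S}, (δ' C / (2 * W')) ^ 2
        = (1 / (2 * W)) * (∑ v, ∑ j ∈ c v, w v j)
          - ∑ C ∈ S, ((∑ v ∈ C, δ v) / (2 * W)) ^ 2 := by
  have hdeg : ∀ C : {C // C ∈ S}, δ' C = ∑ v ∈ C.1, δ v := fun C => by
    simp only [hδ', hw', hδ, sum_subtype_sum_sum_eq_sum_sum_univ hcover hdisj]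
  have htotal : W' = W := by
    have : 2 * W' = 2 * W := by
      rw [hW', hW, sum_univ_eq_sum_sum_of_cover hcover hdisj, ← sum_coe_sort S]
      simp only [hdeg]
    linarith
  refine ⟨htotal, ?_⟩
  have hloops : ∑ C : {C // C ∈ S}, w' C C = ∑ v, ∑ j ∈ c v, w v j := by
    rw [sum_univ_eq_sum_sum_of_block hcover hdisj hc (fun v C => ∑ j ∈ C, w v j),
      ← sum_coe_sort S]
    simp only [hw']
  rw [htotal, hloops, ← sum_coe_sort S]
  simp only [hdeg]

/-- community aggregation preserves modularity.  `w` is the symmetric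
nonnegative edge-weight function of `G`, `δ` the weighted degrees, `2W = ∑ i, δ i` with
`W > 0`, and `S` a partition of the vertex set.  The coarsened graph `G'` has the
communities of `S` as vertices, with edge weights
`w' C C' = ∑ i ∈ C, ∑ j ∈ C', w i j` (a loop when `C = C'`), weighted degrees
`δ' C = ∑ C', w' C C'` and total edge weight `W'` with `2W' = ∑ C, δ' C`.  Then
`W' = W`, and the modularity in `G'` of the partition of `G'` into singletons
(each meta-vertex `C` alone in community `{C}`, so `e_{C→{C}} = w' C C` and
`deg_{{C}} = δ' C`) equals the modularity of `S` in `G`. -/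
theorem aggregation_preserves_modularity {V : Type*} [Fintype V] [DecidableEq V]
    (w : V → V → ℝ)
    (hsymm : ∀ a b : V, w a b = w b a)
    (hnonneg : ∀ a b : V, 0 ≤ w a b)
    (δ : V → ℝ) (hδ : ∀ a : V, δ a = ∑ b, w a b)
    (W : ℝ) (hW : 2 * W = ∑ a, δ a) (hWpos : 0 < W)
    (S : Finset (Finset V))
    (hcover : ∀ v : V, ∃ C ∈ S, v ∈ C)
    (hdisj : ∀ C ∈ S, ∀ C' ∈ S, C ≠ C' → Disjoint C C')
    (hne : ∀ C ∈ S, C.Nonempty)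
    (c : V → Finset V) (hc : ∀ v : V, c v ∈ S ∧ v ∈ c v)
    (w' : {C // C ∈ S} → {C // C ∈ S} → ℝ)
    (hw' : ∀ C C' : {C // C ∈ S}, w' C C' = ∑ i ∈ C.1, ∑ j ∈ C'.1, w i j)
    (δ' : {C // C ∈ S} → ℝ) (hδ' : ∀ C : {C // C ∈ S}, δ' C = ∑ C', w' C C')
    (W' : ℝ) (hW' : 2 * W' = ∑ C : {C // C ∈ S}, δ' C) :
    W' = W ∧
      (1 / (2 * W')) * (∑ C : {C // C ∈ S}, w' C C)
          - ∑ C : {C // C ∈ S}, (δ' C / (2 * W')) ^ 2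
        = (1 / (2 * W)) * (∑ v, ∑ j ∈ c v, w v j)
          - ∑ C ∈ S, ((∑ v ∈ C, δ v) / (2 * W)) ^ 2 :=
  aggregation_preserves_modularity_general w δ hδ W hW S hcover hdisj c hc w' hw' δ' hδ' W' hW'
end
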